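/- The weak left topological center of the bidual of c₀ equals c₀: identifying c₀** with ℓ∞ (with pointwise product, which is the Arens product), an element f ∈ ℓ∞ has the property that multiplication by f is weak*-to-weak continuous on ℓ∞ if and only if f ∈ c₀. -/

import Mathlib

/-!
Every `φ ∈ (ℓ∞)*` agrees on `c₀` with the pairing against the sequence `(φ eᵢ)ᵢ`, because
finitely supported sequences are norm dense in `c₀`; testing `φ` on `∑ᵢ∈s sign(φ eᵢ) eᵢ` shows that
this sequence lies in `ℓ¹`. Hence for `f ∈ c₀` the map `g ↦ φ (f g) = ∑ gᵢ fᵢ φ(eᵢ)` is pairing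
with an `ℓ¹` sequence, i.e. weak* continuous. Conversely, the indicators `1ₛ` of finite sets tend
weak* to `1` and `f 1ₛ ∈ c₀`; if `f ∉ c₀`, a functional vanishing on the closed subspace `c₀` but
not at `f` sees `φ (f 1ₛ) = 0` fail to tend to `φ f`.
-/

open Filter Topology

noncomputable section

/-- `ℓ∞` of real sequences. -/
abbrev Linfty : Type := lp (fun _ : ℕ => ℝ) ⊤

/-- `ℓ¹` of real sequences. -/
abbrev Lone : Type := lp (fun _ : ℕ => ℝ) 1

/-- The weak-* topology on `ℓ∞`, viewed as the dual of `ℓ¹` via the pairing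
`⟨g, x⟩ = ∑ᵢ g i * x i`. -/
def wstarTop : TopologicalSpace Linfty :=
  ⨅ x : Lone, TopologicalSpace.induced
    (fun g : Linfty => ∑' i, (g : ℕ → ℝ) i * (x : ℕ → ℝ) i) inferInstance

/-- The weak topology on `ℓ∞`, induced by all continuous linear functionals. -/
def weakTop : TopologicalSpace Linfty :=
  ⨅ φ : StrongDual ℝ Linfty, TopologicalSpace.induced (fun g : Linfty => φ g) inferInstance

theorem exists_dual_forall_mem_eq_zero_and_ne_zero {𝕜 E : Type*} [RCLike 𝕜]
    [NormedAddCommGroup E] [NormedSpace 𝕜 E] {S : Submodule 𝕜 E} (hS : IsClosed (S : Set E)) {x : E} (hx : x ∉ S) :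
    ∃ φ : StrongDual 𝕜 E, (∀ y ∈ S, φ y = 0) ∧ φ x ≠ 0 := by
  -- `hS` is found by instance search: it makes `E ⧸ S` a normed space, so its dual
  -- separates points.
  obtain ⟨ψ, hψ⟩ := SeparatingDual.exists_ne_zero (R := 𝕜)
    (mt (Submodule.Quotient.mk_eq_zero S).mp hx)
  exact ⟨ψ.comp S.mkQL, fun y hy => by simp [(Submodule.Quotient.mk_eq_zero S).mpr hy], hψ⟩

def c₀ : Submodule ℝ Linfty where
  carrier := {g | Tendsto (g : ℕ → ℝ) atTop (𝓝 0)}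
  add_mem' hg hh := add_zero (0 : ℝ) ▸ hg.add hh
  zero_mem' := tendsto_const_nhds
  smul_mem' c _ hg := mul_zero c ▸ hg.const_mul c

theorem isClosed_c₀ : IsClosed (c₀ : Set Linfty) :=
  (LipschitzWith.uniformEquicontinuous _ 1 fun i => lp.lipschitzWith_one_eval ⊤ i).equicontinuous
    |>.isClosed_setOfPred_tendsto continuous_const

theorem mul_mem_c₀ {f : Linfty} (hf : f ∈ c₀) (g : Linfty) : f * g ∈ c₀ := by
  refine squeeze_zero_norm (fun i => ?_) (by simpa using hf.norm.mul_const ‖g‖)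
  rw [lp.infty_coeFn_mul, Pi.mul_apply, norm_mul]
  exact mul_le_mul_of_nonneg_left (lp.norm_apply_le_norm ENNReal.top_ne_zero g i) (norm_nonneg _)

theorem sum_single_apply (s : Finset ℕ) (c : ℕ → ℝ) (j : ℕ) :
    (∑ i ∈ s, lp.single ⊤ i (c i) : Linfty) j = if j ∈ s then c j else 0 := by
  rw [lp.coeFn_sum, Finset.sum_apply]
  exact Finset.sum_pi_single j c s

theorem sum_single_mem_c₀ (s : Finset ℕ) (c : ℕ → ℝ) : ∑ i ∈ s, lp.single ⊤ i (c i) ∈ c₀ := by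
  refine tendsto_const_nhds.congr' ?_
  filter_upwards [eventually_gt_atTop (s.sup id)] with j hj
  rw [sum_single_apply, if_neg fun hjs => (Finset.le_sup (f := id) hjs).not_gt hj]

theorem hasSum_single_of_mem_c₀ {h : Linfty} (hh : h ∈ c₀) :
    HasSum (fun i => lp.single ⊤ i (h i)) h := by
  rw [HasSum, Metric.tendsto_nhds]
  intro ε hε
  obtain ⟨N, hN⟩ := NormedAddCommGroup.tendsto_atTop.mp hh (ε / 2) (half_pos hε)
  filter_upwards [eventually_ge_atTop (Finset.range N)] with s hs
  rw [dist_eq_norm]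
  refine (lp.norm_le_of_forall_le (half_pos hε).le fun j => ?_).trans_lt (half_lt_self hε)
  rw [lp.coeFn_sub, Pi.sub_apply, sum_single_apply]
  split_ifs with hj
  · simpa using (half_pos hε).le
  · have hNj : N ≤ j := not_lt.mp fun hjN => hj (hs (Finset.mem_range.mpr hjN))
    simpa using (hN j hNj).le

theorem dual_single (φ : StrongDual ℝ Linfty) (i : ℕ) (c : ℝ) :
    φ (lp.single ⊤ i c) = c * φ (lp.single ⊤ i 1) := by
  rw [← smul_eq_mul, ← map_smul, ← lp.single_smul, smul_eq_mul, mul_one]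

theorem sum_abs_dual_single_le (φ : StrongDual ℝ Linfty) (s : Finset ℕ) :
    ∑ i ∈ s, |φ (lp.single ⊤ i 1)| ≤ ‖φ‖ := by
  set u : Linfty := ∑ i ∈ s, lp.single ⊤ i (SignType.sign (φ (lp.single ⊤ i 1)) : ℝ)
  have hu : ‖u‖ ≤ 1 := by
    refine lp.norm_le_of_forall_le zero_le_one fun j => ?_
    rw [sum_single_apply]
    split_ifs
    · rcases lt_trichotomy (φ (lp.single ⊤ j 1)) 0 with h | h | h <;> simp [h]
    · simp
  have hφu : φ u = ∑ i ∈ s, |φ (lp.single ⊤ i 1)| := by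
    rw [map_sum]
    exact Finset.sum_congr rfl fun i _ => by rw [dual_single, sign_mul_self]
  calc ∑ i ∈ s, |φ (lp.single ⊤ i 1)| = φ u := hφu.symm
    _ ≤ ‖φ‖ * ‖u‖ := (le_abs_self _).trans (φ.le_opNorm u)
    _ ≤ ‖φ‖ := mul_le_of_le_one_right (norm_nonneg _) hu

def dualCoeffs (φ : StrongDual ℝ Linfty) : Lone :=
  ⟨fun i => φ (lp.single ⊤ i 1), memℓp_gen <| by
    simpa using summable_of_sum_le (fun _ => abs_nonneg _) (sum_abs_dual_single_le φ)⟩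

theorem hasSum_dual_of_mem_c₀ (φ : StrongDual ℝ Linfty) {h : Linfty} (hh : h ∈ c₀) :
    HasSum (fun i => h i * dualCoeffs φ i) (φ h) := by
  have h_map := (hasSum_single_of_mem_c₀ hh).mapL φ
  simp only [dual_single φ _ (h _)] at h_map
  exact h_map

theorem continuous_tsum_mul_wstarTop (x : Lone) :
    Continuous[wstarTop, _] fun g : Linfty => ∑' i, g i * x i :=
  continuous_iInf_dom continuous_induced_dom

theorem continuous_weakTop_iff {X : Type*} {t : TopologicalSpace X} {F : X → Linfty} :
    Continuous[t, weakTop] F ↔ ∀ φ : StrongDual ℝ Linfty, Continuous fun a => φ (F a) := by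
  unfold weakTop
  simp only [continuous_iInf_rng, continuous_induced_rng]
  rfl

theorem tendsto_nhds_wstarTop_iff {ι : Type*} {l : Filter ι} {F : ι → Linfty} {a : Linfty} :
    Tendsto F l (@nhds _ wstarTop a) ↔
      ∀ x : Lone, Tendsto (fun k => ∑' i, F k i * x i) l (𝓝 (∑' i, a i * x i)) := by
  unfold wstarTop
  simp only [nhds_iInf, nhds_induced, tendsto_iInf, tendsto_comap_iff]
  rfl

theorem tendsto_sum_single_one_wstarTop :
    Tendsto (fun s : Finset ℕ => (∑ i ∈ s, lp.single ⊤ i 1 : Linfty)) atTop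
      (@nhds _ wstarTop 1) := by
  refine tendsto_nhds_wstarTop_iff.mpr fun x => ?_
  have hpair : ∀ s : Finset ℕ,
      ∑' i, (∑ j ∈ s, lp.single ⊤ j 1 : Linfty) i * x i = ∑ i ∈ s, x i := fun s => by
    rw [tsum_eq_sum fun i hi => by rw [sum_single_apply, if_neg hi, zero_mul]]
    exact Finset.sum_congr rfl fun i hi => by rw [sum_single_apply, if_pos hi, one_mul]
  have hone : ∑' i, (1 : Linfty) i * x i = ∑' i, x i := by
    simp only [lp.infty_coeFn_one, Pi.one_apply, one_mul]
  rw [hone]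
  simp only [hpair]
  have hx : Summable fun i => ‖x i‖ := by
    simpa using (lp.memℓp x).summable (p := 1) (by norm_num)
  exact hx.of_norm.hasSum

theorem continuous_dual_mul_of_mem_c₀ {f : Linfty} (hf : f ∈ c₀) (φ : StrongDual ℝ Linfty) :
    Continuous[wstarTop, _] fun g : Linfty => φ (f * g) := by
  let y : Lone := lp.holder 1 (fun _ => ContinuousLinearMap.mul ℝ ℝ)
    (fun _ => ContinuousLinearMap.opNorm_mul_le ℝ ℝ) f (dualCoeffs φ)
  have hφ : (fun g : Linfty => φ (f * g)) = fun g => ∑' i, g i * y i := funext fun g => by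
    rw [← (hasSum_dual_of_mem_c₀ φ (mul_mem_c₀ hf g)).tsum_eq]
    refine tsum_congr fun i => ?_
    rw [lp.infty_coeFn_mul, Pi.mul_apply, mul_assoc, mul_left_comm]
    rfl
  rw [hφ]
  exact continuous_tsum_mul_wstarTop y

theorem mem_c₀_of_continuous_mul {f : Linfty}
    (hf : Continuous[wstarTop, weakTop] fun g : Linfty => f * g) : f ∈ c₀ := by
  by_contra hf₀
  obtain ⟨φ, hφc₀, hφf⟩ := exists_dual_forall_mem_eq_zero_and_ne_zero isClosed_c₀ hf₀
  have hlim : Tendsto (fun s : Finset ℕ => φ (f * ∑ i ∈ s, lp.single ⊤ i 1)) atTop (𝓝 (φ f)) := by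
    have hφ_cont := continuous_weakTop_iff.mp hf φ
    simpa only [mul_one, Function.comp_def] using
      (@Continuous.tendsto _ _ wstarTop _ _ hφ_cont 1).comp tendsto_sum_single_one_wstarTop
  have hzero : ∀ s : Finset ℕ, φ (f * ∑ i ∈ s, lp.single ⊤ i 1) = 0 := fun s =>
    hφc₀ _ (mul_comm f _ ▸ mul_mem_c₀ (sum_single_mem_c₀ s 1) f)
  simp only [hzero] at hlim
  exact hφf (tendsto_nhds_unique hlim tendsto_const_nhds)

/-- identifying `c₀** ≅ ℓ∞` (with pointwise product, the Arens product),
an element `f ∈ ℓ∞` multiplies weak-*-to-weak continuously iff `f ∈ c₀`. -/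
theorem stmt6 (f : Linfty) :
    (@Continuous _ _ wstarTop weakTop fun g : Linfty => f * g) ↔
      Tendsto (f : ℕ → ℝ) atTop (𝓝 0) :=
  ⟨mem_c₀_of_continuous_mul, fun hf =>
    continuous_weakTop_iff.mpr (continuous_dual_mul_of_mem_c₀ hf)⟩

end
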